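/- arXiv:1912.00160 — 2 statements merged into one kernel-verified Lean document; each statement's English description precedes it below -/
import Mathlib

section
/- Define m_n := (n!)^2 K_n^2 for n ≥ 1, where K_n := ∫_0^∞ (ln(1+x))^n e^{-x} dx. Then m_{n+1}/m_n = (n+1)^2 (ln(n+1))^2 (1 + o(1)) as n → ∞; that is, the quotient m_{n+1} / (m_n · (n+1)^2 · (ln(n+1))^2) tends to 1 as n → ∞. -/
/-!
`Kₙ₊₁ / Kₙ` is the mean of `log (1 + x)` under the weight `log (1 + x)ⁿ e⁻ˣ`, whose mass sits
near `x ≈ n / log n`. Splitting the integral at `A = 4 (n + 1) log (n + 1)`, beyond which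
`log (1 + x)ⁿ⁺¹ ≤ e^{x/2}` so that the tail is `O(1)`, while `Kₙ ≥ e^{-e}`, gives
`Kₙ₊₁ / Kₙ ≤ log n + log log n + O(1)`. Conversely, comparing the mass below
`B = (1 + c) / e - 1` with the lower bound `Kₙ ≥ log (1 + c)ⁿ e^{-(c+1)}` at `c = (n + 1) / (2 log (n + 1))`
shows that mass is negligible, so `Kₙ₊₁ / Kₙ ≥ log (1 + B) (1 - o(1)) = log n - O(log log n)`.
Hence `Kₙ₊₁ / (Kₙ log (n + 1)) → 1`, and `m_{n+1} / mₙ = (n + 1)² (Kₙ₊₁ / Kₙ)²`.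
-/

open MeasureTheory Filter Topology Real Set

noncomputable def logMomentIntegrand (n : ℕ) (x : ℝ) : ℝ := log (1 + x) ^ n * exp (-x)

noncomputable def logMoment (n : ℕ) : ℝ := ∫ x in Ioi (0 : ℝ), logMomentIntegrand n x

lemma logMomentIntegrand_nonneg (n : ℕ) {x : ℝ} (hx : 0 ≤ x) : 0 ≤ logMomentIntegrand n x :=
  mul_nonneg (pow_nonneg (log_nonneg (by linarith)) _) (exp_nonneg _)

lemma logMomentIntegrand_succ (n : ℕ) (x : ℝ) :
    logMomentIntegrand (n + 1) x = log (1 + x) * logMomentIntegrand n x := by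
  simp only [logMomentIntegrand, pow_succ]; ring

lemma logMomentIntegrand_le_pow_mul_exp_neg (n : ℕ) {x : ℝ} (hx : 0 ≤ x) :
    logMomentIntegrand n x ≤ x ^ n * exp (-x) := by
  have hlog : log (1 + x) ≤ x := by linarith [log_le_sub_one_of_pos (by linarith : 0 < 1 + x)]
  exact mul_le_mul_of_nonneg_right
    (pow_le_pow_left₀ (log_nonneg (by linarith)) hlog n) (exp_nonneg _)

lemma integrableOn_logMomentIntegrand (n : ℕ) {s : Set ℝ} (hs : s ⊆ Ioi 0) :
    IntegrableOn (logMomentIntegrand n) s := by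
  refine IntegrableOn.mono_set ?_ hs
  refine (GammaIntegral_convergent (s := n + 1) (by positivity)).mono' ?_ ?_
  · unfold logMomentIntegrand; fun_prop
  · filter_upwards [ae_restrict_mem measurableSet_Ioi] with x (hx : 0 < x)
    rw [norm_of_nonneg (logMomentIntegrand_nonneg n hx.le), add_sub_cancel_right, rpow_natCast,
      mul_comm]
    exact logMomentIntegrand_le_pow_mul_exp_neg n hx.le

lemma setIntegral_logMomentIntegrand_le_logMoment (n : ℕ) {s : Set ℝ} (hs : s ⊆ Ioi 0) :
    ∫ x in s, logMomentIntegrand n x ≤ logMoment n :=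
  setIntegral_mono_set (integrableOn_logMomentIntegrand n subset_rfl)
    ((ae_restrict_mem measurableSet_Ioi).mono fun _ hx ↦ logMomentIntegrand_nonneg n hx.le)
    hs.eventuallyLE

lemma logMoment_eq_add (n : ℕ) {A : ℝ} (hA : 0 ≤ A) :
    logMoment n =
      (∫ x in Ioc 0 A, logMomentIntegrand n x) + ∫ x in Ioi A, logMomentIntegrand n x := by
  rw [logMoment, ← Ioc_union_Ioi_eq_Ioi hA]
  exact setIntegral_union (Ioc_disjoint_Ioi le_rfl) measurableSet_Ioi
    (integrableOn_logMomentIntegrand n Ioc_subset_Ioi_self)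
    (integrableOn_logMomentIntegrand n (Ioi_subset_Ioi hA))

lemma pow_log_mul_exp_le_logMoment (n : ℕ) {c : ℝ} (hc : 0 ≤ c) :
    log (1 + c) ^ n * exp (-(c + 1)) ≤ logMoment n := by
  have hsub : Ioc c (c + 1) ⊆ Ioi 0 := fun x hx ↦ hc.trans_lt hx.1
  calc log (1 + c) ^ n * exp (-(c + 1))
      = ∫ _ in Ioc c (c + 1), log (1 + c) ^ n * exp (-(c + 1)) := by simp
    _ ≤ ∫ x in Ioc c (c + 1), logMomentIntegrand n x := by
      refine setIntegral_mono_on (integrableOn_const measure_Ioc_lt_top.ne)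
        (integrableOn_logMomentIntegrand n hsub) measurableSet_Ioc fun x ⟨hcx, hxc⟩ ↦ ?_
      exact mul_le_mul (pow_le_pow_left₀ (log_nonneg (by linarith))
        (log_le_log (by linarith) (by linarith)) n) (exp_le_exp.2 (by linarith))
        (exp_nonneg _) (pow_nonneg (log_nonneg (by linarith)) _)
    _ ≤ logMoment n := setIntegral_logMomentIntegrand_le_logMoment n hsub

lemma exp_neg_exp_one_le_logMoment (n : ℕ) : exp (-exp 1) ≤ logMoment n := by
  simpa [exp_nonneg] using pow_log_mul_exp_le_logMoment n (c := exp 1 - 1)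
    (by linarith [add_one_le_exp 1])

lemma logMoment_pos (n : ℕ) : 0 < logMoment n :=
  (exp_pos _).trans_le (exp_neg_exp_one_le_logMoment n)

lemma setIntegral_Ioc_logMomentIntegrand_le (n : ℕ) {B : ℝ} (hB : 0 ≤ B) :
    ∫ x in Ioc 0 B, logMomentIntegrand n x ≤ log (1 + B) ^ n := by
  have hexp : IntegrableOn (fun x : ℝ ↦ exp (-x)) (Ioi 0) := by
    simpa using exp_neg_integrableOn_Ioi 0 one_pos
  calc ∫ x in Ioc 0 B, logMomentIntegrand n x
      ≤ ∫ x in Ioc 0 B, log (1 + B) ^ n * exp (-x) := by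
        refine setIntegral_mono_on (integrableOn_logMomentIntegrand n Ioc_subset_Ioi_self)
          ((hexp.mono_set Ioc_subset_Ioi_self).const_mul _) measurableSet_Ioc
          fun x ⟨h0x, hxB⟩ ↦ ?_
        exact mul_le_mul_of_nonneg_right (pow_le_pow_left₀ (log_nonneg (by linarith))
          (log_le_log (by linarith) (by linarith)) n) (exp_nonneg _)
    _ = log (1 + B) ^ n * ∫ x in Ioc 0 B, exp (-x) := integral_const_mul _ _
    _ ≤ log (1 + B) ^ n * ∫ x in Ioi 0, exp (-x) := by
        refine mul_le_mul_of_nonneg_left ?_ (pow_nonneg (log_nonneg (by linarith)) _)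
        exact setIntegral_mono_set hexp (Eventually.of_forall fun _ ↦ (exp_pos _).le)
          Ioc_subset_Ioi_self.eventuallyLE
    _ = log (1 + B) ^ n := by rw [integral_exp_neg_Ioi_zero, mul_one]

lemma setIntegral_Ioi_logMomentIntegrand_le (n : ℕ) {A : ℝ} (hA : 0 ≤ A)
    (h : ∀ x, A < x → log (1 + x) ^ n ≤ exp (x / 2)) :
    ∫ x in Ioi A, logMomentIntegrand n x ≤ 2 := by
  calc ∫ x in Ioi A, logMomentIntegrand n x ≤ ∫ x in Ioi A, exp (-(1 / 2) * x) := by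
        refine setIntegral_mono_on (integrableOn_logMomentIntegrand n (Ioi_subset_Ioi hA))
          (exp_neg_integrableOn_Ioi A one_half_pos) measurableSet_Ioi fun x hx ↦ ?_
        calc logMomentIntegrand n x ≤ exp (x / 2) * exp (-x) :=
              mul_le_mul_of_nonneg_right (h x hx) (exp_nonneg _)
          _ = exp (-(1 / 2) * x) := by rw [← exp_add]; ring_nf
    _ = 2 * exp (-(1 / 2) * A) := by
        rw [integral_exp_mul_Ioi (by norm_num)]; ring
    _ ≤ 2 := by
        have : exp (-(1 / 2) * A) ≤ 1 := exp_le_one_iff.2 (by linarith)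
        linarith

lemma logMoment_succ_le (n : ℕ) {A : ℝ} (hA : 0 ≤ A)
    (h : ∀ x, A < x → log (1 + x) ^ (n + 1) ≤ exp (x / 2)) :
    logMoment (n + 1) ≤ log (1 + A) * logMoment n + 2 := by
  have hhead : ∫ x in Ioc 0 A, logMomentIntegrand (n + 1) x ≤ log (1 + A) * logMoment n :=
    calc ∫ x in Ioc 0 A, logMomentIntegrand (n + 1) x
        ≤ ∫ x in Ioc 0 A, log (1 + A) * logMomentIntegrand n x := by
          refine setIntegral_mono_on (integrableOn_logMomentIntegrand _ Ioc_subset_Ioi_self)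
            ((integrableOn_logMomentIntegrand n Ioc_subset_Ioi_self).const_mul _) measurableSet_Ioc
            fun x ⟨h0x, hxA⟩ ↦ ?_
          rw [logMomentIntegrand_succ]
          exact mul_le_mul_of_nonneg_right (log_le_log (by linarith) (by linarith))
            (logMomentIntegrand_nonneg n h0x.le)
      _ = log (1 + A) * ∫ x in Ioc 0 A, logMomentIntegrand n x := integral_const_mul _ _
      _ ≤ log (1 + A) * logMoment n := by
          gcongr
          · exact log_nonneg (by linarith)
          · exact setIntegral_logMomentIntegrand_le_logMoment n Ioc_subset_Ioi_self
  linarith [logMoment_eq_add (n + 1) hA, setIntegral_Ioi_logMomentIntegrand_le (n + 1) hA h]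

lemma logMoment_succ_ge (n : ℕ) {B : ℝ} (hB : 0 ≤ B) :
    log (1 + B) * (logMoment n - log (1 + B) ^ n) ≤ logMoment (n + 1) := by
  have hlog : 0 ≤ log (1 + B) := log_nonneg (by linarith)
  calc log (1 + B) * (logMoment n - log (1 + B) ^ n)
      ≤ log (1 + B) * ∫ x in Ioi B, logMomentIntegrand n x := by
        gcongr
        linarith [logMoment_eq_add n hB, setIntegral_Ioc_logMomentIntegrand_le n hB]
    _ = ∫ x in Ioi B, log (1 + B) * logMomentIntegrand n x := (integral_const_mul _ _).symm
    _ ≤ ∫ x in Ioi B, logMomentIntegrand (n + 1) x := by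
        refine setIntegral_mono_on
          ((integrableOn_logMomentIntegrand n (Ioi_subset_Ioi hB)).const_mul _)
          (integrableOn_logMomentIntegrand _ (Ioi_subset_Ioi hB)) measurableSet_Ioi
          fun x (hx : B < x) ↦ ?_
        rw [logMomentIntegrand_succ]
        exact mul_le_mul_of_nonneg_right (log_le_log (by linarith) (by linarith))
          (logMomentIntegrand_nonneg n (by linarith))
    _ ≤ logMoment (n + 1) := setIntegral_logMomentIntegrand_le_logMoment _ (Ioi_subset_Ioi hB)

lemma mul_log_le_half_of_le {k A x : ℝ} (hk : 0 ≤ k) (hA : 0 < A) (h2k : 2 * k ≤ A)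
    (hkA : k * log A ≤ A / 2) (hx : A ≤ x) : k * log x ≤ x / 2 := by
  have hxA : log x ≤ log A + (x / A - 1) := by
    have := log_le_sub_one_of_pos (div_pos (hA.trans_le hx) hA)
    rwa [log_div (hA.trans_le hx).ne' hA.ne', sub_le_iff_le_add'] at this
  have hslope : k * (x / A - 1) ≤ (x - A) / 2 := by
    have : 0 ≤ x / A - 1 := by rw [sub_nonneg, one_le_div hA]; exact hx
    calc k * (x / A - 1) ≤ A / 2 * (x / A - 1) := by gcongr; linarith
      _ = (x - A) / 2 := by field_simp
  calc k * log x ≤ k * log A + k * (x / A - 1) := by nlinarith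
    _ ≤ A / 2 + (x - A) / 2 := add_le_add hkA hslope
    _ = x / 2 := by ring

lemma log_one_add_pow_le_exp_half {k : ℕ} {A : ℝ} (hA : 0 < A) (h2k : 2 * (k : ℝ) ≤ A)
    (hkA : k * log A ≤ A / 2) (x : ℝ) (hx : A < x) : log (1 + x) ^ k ≤ exp (x / 2) := by
  have hx0 : 0 < x := hA.trans hx
  calc log (1 + x) ^ k ≤ x ^ k :=
        pow_le_pow_left₀ (log_nonneg (by linarith))
          (by linarith [log_le_sub_one_of_pos (by linarith : 0 < 1 + x)]) k
    _ = exp (k * log x) := by rw [exp_nat_mul, exp_log hx0]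
    _ ≤ exp (x / 2) := exp_le_exp.2 (mul_log_le_half_of_le k.cast_nonneg hA h2k hkA hx.le)

lemma logMoment_succ_div_le (n : ℕ) {A : ℝ} (hA : 0 < A) (h2n : 2 * ((n : ℝ) + 1) ≤ A)
    (hnA : ((n : ℝ) + 1) * log A ≤ A / 2) :
    logMoment (n + 1) / logMoment n ≤ log (1 + A) + 2 * exp (exp 1) := by
  have hsucc := logMoment_succ_le n hA.le
    (log_one_add_pow_le_exp_half hA (by push_cast; exact h2n) (by push_cast; exact hnA))
  have hK : 1 ≤ exp (exp 1) * logMoment n := by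
    calc (1 : ℝ) = exp (exp 1) * exp (-exp 1) := by rw [← exp_add, add_neg_cancel, exp_zero]
      _ ≤ exp (exp 1) * logMoment n := by gcongr; exact exp_neg_exp_one_le_logMoment n
  rw [div_le_iff₀ (logMoment_pos n)]
  linarith

lemma logMoment_succ_div_ge (n : ℕ) {c : ℝ} (hc : exp 1 - 1 ≤ c) :
    (log (1 + c) - 1) * (1 - exp (c + 1 - n / log (1 + c))) ≤
      logMoment (n + 1) / logMoment n := by
  set ℓ := log (1 + c) with hℓ
  have hc1 : exp 1 ≤ 1 + c := by linarith
  have hℓ1 : 1 ≤ ℓ := by rw [hℓ, le_log_iff_exp_le (by linarith [exp_pos 1])]; exact hc1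
  have hK := logMoment_pos n
  set B := (1 + c) / exp 1 - 1 with hB
  have hB0 : 0 ≤ B := by rw [hB, sub_nonneg, one_le_div (exp_pos 1)]; exact hc1
  have hlogB : log (1 + B) = ℓ - 1 := by
    rw [hB, add_sub_cancel, log_div (by linarith [exp_pos 1]) (exp_pos 1).ne', log_exp]
  have hpow : (ℓ - 1) ^ n ≤ logMoment n * exp (c + 1 - n / ℓ) :=
    calc (ℓ - 1) ^ n = ℓ ^ n * (1 - 1 / ℓ) ^ n := by
          rw [← mul_pow]; congr 1; field_simp
      _ ≤ ℓ ^ n * exp (-(1 / ℓ)) ^ n := by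
          gcongr
          · rw [sub_nonneg, div_le_one (by linarith)]; exact hℓ1
          · exact one_sub_le_exp_neg _
      _ = ℓ ^ n * exp (-(c + 1)) * exp (c + 1 - n / ℓ) := by
          rw [← exp_nat_mul, mul_assoc, ← exp_add]; ring_nf
      _ ≤ logMoment n * exp (c + 1 - n / ℓ) := by
          gcongr; exact pow_log_mul_exp_le_logMoment n (by linarith [add_one_le_exp 1])
  have hsucc := logMoment_succ_ge n hB0
  rw [hlogB] at hsucc
  rw [le_div_iff₀ hK]
  calc (ℓ - 1) * (1 - exp (c + 1 - n / ℓ)) * logMoment n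
      = (ℓ - 1) * (logMoment n - logMoment n * exp (c + 1 - n / ℓ)) := by ring
    _ ≤ (ℓ - 1) * (logMoment n - (ℓ - 1) ^ n) := by gcongr
    _ ≤ logMoment (n + 1) := hsucc

lemma tendsto_add_mul_log_add_const_div_self (a C : ℝ) :
    Tendsto (fun x ↦ (x + a * log x + C) / x) atTop (𝓝 1) := by
  have hlog : Tendsto (fun x ↦ log x / x) atTop (𝓝 0) := by
    simpa using isLittleO_log_id_atTop.tendsto_div_nhds_zero
  have hlim := ((hlog.const_mul a).add (tendsto_inv_atTop_zero.const_mul C)).const_add 1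
  rw [mul_zero, mul_zero, add_zero, add_zero] at hlim
  refine hlim.congr' ?_
  filter_upwards [eventually_ne_atTop 0] with x hx
  field_simp
  ring

lemma tendsto_log_natCast_add_one : Tendsto (fun n : ℕ ↦ log ((n : ℝ) + 1)) atTop atTop :=
  tendsto_log_atTop.comp (tendsto_atTop_add_const_right _ 1 tendsto_natCast_atTop_atTop)

lemma tendsto_natCast_add_one_div_log :
    Tendsto (fun n : ℕ ↦ ((n : ℝ) + 1) / log ((n : ℝ) + 1)) atTop atTop := by
  refine ((tendsto_exp_div_pow_atTop 1).comp tendsto_log_natCast_add_one).congr fun n ↦ ?_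
  simp [exp_log (by positivity : (0 : ℝ) < n + 1)]

lemma eventually_logMoment_succ_div_le :
    ∀ᶠ n : ℕ in atTop, logMoment (n + 1) / logMoment n ≤
      log ((n : ℝ) + 1) + log (log ((n : ℝ) + 1)) + (log 5 + 2 * exp (exp 1)) := by
  filter_upwards [tendsto_log_natCast_add_one.eventually_ge_atTop 1,
    tendsto_natCast_add_one_div_log.eventually_ge_atTop 4] with n hL hnL
  set L := log ((n : ℝ) + 1) with hL_def
  have hn : (0 : ℝ) < n + 1 := by positivity
  have hL0 : 0 < L := by linarith
  have h4L : 4 * L ≤ n + 1 := by rwa [le_div_iff₀ hL0] at hnL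
  have hlogA : log (4 * (n + 1) * L) = log (4 * L) + L := by
    rw [mul_right_comm, log_mul (by positivity) hn.ne']
  have hlog4L : log (4 * L) ≤ L := by
    rw [hL_def]; exact log_le_log (by positivity) h4L
  have hlog1A : log (1 + 4 * (n + 1) * L) ≤ log 5 + L + log L :=
    calc log (1 + 4 * (n + 1) * L) ≤ log (5 * ((n + 1) * L)) :=
          log_le_log (by positivity) (by nlinarith)
      _ = log 5 + L + log L := by
          rw [log_mul (by norm_num) (by positivity), log_mul hn.ne' hL0.ne', ← hL_def]; ring
  have hbound := logMoment_succ_div_le n (A := 4 * (n + 1) * L) (by positivity) (by nlinarith)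
    (by rw [hlogA]; nlinarith)
  linarith

lemma eventually_logMoment_succ_div_ge :
    ∀ᶠ n : ℕ in atTop,
      (log ((n : ℝ) + 1) - log (log ((n : ℝ) + 1)) - (1 + log 2)) *
        (1 - exp (2 - ((n : ℝ) + 1) / log ((n : ℝ) + 1) / 2)) ≤
      logMoment (n + 1) / logMoment n := by
  filter_upwards [tendsto_log_natCast_add_one.eventually_ge_atTop 1,
    tendsto_natCast_add_one_div_log.eventually_ge_atTop 4, eventually_ge_atTop 1]
    with n hL hnL hn1
  set L := log ((n : ℝ) + 1) with hL_def
  have hn : (0 : ℝ) < n + 1 := by positivity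
  have hn1' : (1 : ℝ) ≤ n := by exact_mod_cast hn1
  have hL0 : 0 < L := by linarith
  set c := ((n : ℝ) + 1) / L / 2 with hc
  have hc2 : 2 ≤ c := by linarith
  have hcn : 1 + c ≤ n + 1 := by
    have : c ≤ ((n : ℝ) + 1) / 2 := by rw [hc]; gcongr; exact div_le_self hn.le hL
    linarith
  have hlogc : L - log L - log 2 ≤ log (1 + c) :=
    calc L - log L - log 2 = log c := by
          rw [hc, div_div, log_div hn.ne' (by positivity), log_mul hL0.ne' (by norm_num)]; ring
      _ ≤ log (1 + c) := log_le_log (by positivity) (by linarith)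
  have hlogc' : log (1 + c) ≤ L := log_le_log (by positivity) hcn
  have hlogc1 : 1 ≤ log (1 + c) := by
    rw [le_log_iff_exp_le (by positivity)]; linarith [exp_one_lt_d9]
  have hexp : c + 1 - n / log (1 + c) ≤ 2 - c := by
    have hdiv : (n : ℝ) / L ≤ n / log (1 + c) :=
      div_le_div_of_nonneg_left (by positivity) (by linarith) hlogc'
    have hnL : (n : ℝ) / L = 2 * c - 1 / L := by rw [hc]; field_simp; ring
    have hinvL : 1 / L ≤ 1 := by rw [div_le_one hL0]; exact hL
    linarith
  refine le_trans ?_ (logMoment_succ_div_ge n (c := c) (by linarith [exp_one_lt_d9]))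
  have hexp0 : 0 ≤ 1 - exp (2 - c) := by rw [sub_nonneg, exp_le_one_iff]; linarith
  calc _ ≤ (log (1 + c) - 1) * (1 - exp (2 - c)) :=
        mul_le_mul_of_nonneg_right (by linarith) hexp0
    _ ≤ _ := mul_le_mul_of_nonneg_left (by gcongr) (by linarith)

lemma tendsto_logMoment_succ_div_mul_log :
    Tendsto (fun n : ℕ ↦ logMoment (n + 1) / (logMoment n * log ((n : ℝ) + 1)))
      atTop (𝓝 1) := by
  have hL := tendsto_log_natCast_add_one
  have hexp : Tendsto (fun n : ℕ ↦ 1 - exp (2 - ((n : ℝ) + 1) / log ((n : ℝ) + 1) / 2))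
      atTop (𝓝 1) := by
    have := tendsto_atBot_add_const_left _ 2
      (tendsto_neg_atTop_atBot.comp (tendsto_natCast_add_one_div_log.atTop_div_const two_pos))
    simpa [sub_eq_add_neg] using (tendsto_exp_atBot.comp this).const_sub 1
  have hlo := ((tendsto_add_mul_log_add_const_div_self (-1) (-(1 + log 2))).comp hL).mul hexp
  have hhi := (tendsto_add_mul_log_add_const_div_self 1 (log 5 + 2 * exp (exp 1))).comp hL
  rw [mul_one] at hlo
  refine tendsto_of_tendsto_of_tendsto_of_le_of_le' hlo hhi ?_ ?_
  · filter_upwards [eventually_logMoment_succ_div_ge, hL.eventually_gt_atTop 0] with n hn hL0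
    rw [← div_div]
    calc _ = (log ((n : ℝ) + 1) - log (log ((n : ℝ) + 1)) - (1 + log 2)) *
          (1 - exp (2 - ((n : ℝ) + 1) / log ((n : ℝ) + 1) / 2)) / log ((n : ℝ) + 1) := by
          simp only [Function.comp_apply]; ring
      _ ≤ _ := by gcongr
  · filter_upwards [eventually_logMoment_succ_div_le, hL.eventually_gt_atTop 0] with n hn hL0
    rw [← div_div]
    calc _ ≤ (log ((n : ℝ) + 1) + log (log ((n : ℝ) + 1)) + (log 5 + 2 * exp (exp 1))) /
          log ((n : ℝ) + 1) := by gcongr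
      _ = _ := by simp only [Function.comp_apply]; ring

/-- With `mₙ = (n!)² Kₙ²` and `Kₙ = ∫_0^∞ (ln(1+x))ⁿ e^{-x} dx`, one has
`m_{n+1}/mₙ = (n+1)² (ln(n+1))² (1 + o(1))` as `n → ∞`, i.e. the quotient
`m_{n+1} / (mₙ (n+1)² (ln(n+1))²)` tends to `1`. -/
theorem moment_ratio_asymptotics
    (K : ℕ → ℝ)
    (hK : ∀ n : ℕ, K n = ∫ x in Set.Ioi (0 : ℝ), (Real.log (1 + x)) ^ n * Real.exp (-x))
    (m : ℕ → ℝ)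
    (hm : ∀ n : ℕ, m n = (n.factorial : ℝ) ^ 2 * K n ^ 2) :
    Tendsto
      (fun n : ℕ =>
        m (n + 1) / (m n * (n + 1) ^ 2 * Real.log (n + 1) ^ 2))
      atTop (𝓝 1) := by
  obtain rfl : K = logMoment := funext hK
  have hsq := tendsto_logMoment_succ_div_mul_log.pow 2
  rw [one_pow] at hsq
  refine hsq.congr' ?_
  filter_upwards [tendsto_log_natCast_add_one.eventually_gt_atTop 0] with n hL
  have hfac : ((n + 1).factorial : ℝ) = (n + 1) * n.factorial := by
    rw [Nat.factorial_succ]; push_cast; ring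
  have hK0 := (logMoment_pos n).ne'
  rw [hm, hm, hfac]
  field_simp
end

section
/- Let W : [0, ∞) → [0, ∞) be the Lambert W function, i.e., W(t) ≥ 0 and W(t) e^{W(t)} = t for all t ≥ 0. Then (t+1)/W(t+1) − t/W(t) → 0 as t → ∞; moreover this difference is nonnegative and bounded above by 1/W(t+1) for all t > 0. -/
/-!
Since `W t * exp (W t) = t`, the quotient `t / W t` is just `exp (W t)`, so the difference is
`exp (W (t+1)) - exp (W t)`, nonnegative because `W` is increasing. Writing `a = W t`, `b = W (t+1)`,
`1 = b e^b - a e^a ≥ b (e^b - e^a)` gives the upper bound `1 / b`, which tends to `0` because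
`t ≤ e^{2 W t}` forces `W t → ∞`.
-/

open Real Filter Topology

lemma strictMonoOn_mul_exp : StrictMonoOn (fun x : ℝ => x * exp x) (Set.Ici 0) :=
  fun _ _ _ hb hab => mul_lt_mul hab (exp_le_exp.2 hab.le) (exp_pos _) hb

lemma mul_exp_sub_exp_le_mul_exp_sub_mul_exp {a b : ℝ} (hab : a ≤ b) :
    b * (exp b - exp a) ≤ b * exp b - a * exp a := by
  nlinarith [exp_pos a]

lemma div_eq_exp_of_mul_exp_eq {w t : ℝ} (h : w * exp w = t) (ht : 0 < t) : t / w = exp w := by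
  have hw : w ≠ 0 := by rintro rfl; simp [← h] at ht
  rw [← h, mul_div_cancel_left₀ _ hw]

lemma log_le_two_mul_of_mul_exp_eq {w t : ℝ} (h : w * exp w = t) (ht : 0 < t) :
    log t ≤ 2 * w := by
  have hw : w ≤ exp w := by linarith [add_one_le_exp w]
  rw [log_le_iff_le_exp ht, two_mul, exp_add, ← h]
  exact mul_le_mul_of_nonneg_right hw (exp_pos w).le

lemma tendsto_atTop_of_mul_exp_eq {W : ℝ → ℝ} (hW : ∀ᶠ t in atTop, W t * exp (W t) = t) :
    Tendsto W atTop atTop := by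
  have hlog : Tendsto (fun t => log t / 2) atTop atTop :=
    tendsto_log_atTop.atTop_div_const two_pos
  refine tendsto_atTop_mono' atTop ?_ hlog
  filter_upwards [hW, eventually_gt_atTop 0] with t h ht
  linarith [log_le_two_mul_of_mul_exp_eq h ht]

lemma div_sub_div_mem_of_mul_exp_eq {a b s : ℝ} (ha : 0 ≤ a) (hb : 0 ≤ b)
    (has : a * exp a = s) (hbs : b * exp b = s + 1) (hs : 0 < s) :
    0 ≤ (s + 1) / b - s / a ∧ (s + 1) / b - s / a ≤ 1 / b := by
  have hab : a ≤ b := (strictMonoOn_mul_exp.le_iff_le ha hb).1 (by simp only [has, hbs]; linarith)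
  have hb_pos : 0 < b := by
    rcases hb.lt_or_eq with h | rfl
    · exact h
    · simp at hbs; linarith
  rw [div_eq_exp_of_mul_exp_eq has hs, div_eq_exp_of_mul_exp_eq hbs (by linarith)]
  refine ⟨sub_nonneg.2 (exp_le_exp.2 hab), (le_div_iff₀ hb_pos).2 ?_⟩
  have := mul_exp_sub_exp_le_mul_exp_sub_mul_exp hab
  rw [has, hbs] at this
  linarith

/-- For the Lambert W function, `(t+1)/W(t+1) - t/W(t) → 0` as `t → ∞`; moreover this
difference is nonnegative and bounded above by `1/W(t+1)` for all `t > 0`. -/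
theorem lambertW_quotient_difference
    (W : ℝ → ℝ)
    (hW : ∀ t : ℝ, 0 ≤ t → 0 ≤ W t ∧ W t * Real.exp (W t) = t) :
    (∀ t : ℝ, 0 < t →
      0 ≤ (t + 1) / W (t + 1) - t / W t ∧
      (t + 1) / W (t + 1) - t / W t ≤ 1 / W (t + 1)) ∧
    Tendsto (fun t : ℝ => (t + 1) / W (t + 1) - t / W t) atTop (𝓝 0) := by
  have hbounds : ∀ t : ℝ, 0 < t →
      0 ≤ (t + 1) / W (t + 1) - t / W t ∧ (t + 1) / W (t + 1) - t / W t ≤ 1 / W (t + 1) :=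
    fun t ht => div_sub_div_mem_of_mul_exp_eq (hW t ht.le).1 (hW (t + 1) (by linarith)).1
      (hW t ht.le).2 (hW (t + 1) (by linarith)).2 ht
  have hW_top : Tendsto W atTop atTop :=
    tendsto_atTop_of_mul_exp_eq ((eventually_ge_atTop 0).mono fun t ht => (hW t ht).2)
  have hW_shift_top : Tendsto (fun t => W (t + 1)) atTop atTop :=
    hW_top.comp (tendsto_atTop_add_const_right atTop 1 tendsto_id)
  have hinv : Tendsto (fun t => 1 / W (t + 1)) atTop (𝓝 0) := by
    simpa only [one_div, Pi.inv_def] using hW_shift_top.inv_tendsto_atTop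
  refine ⟨hbounds, tendsto_of_tendsto_of_tendsto_of_le_of_le' tendsto_const_nhds hinv ?_ ?_⟩
  · filter_upwards [eventually_gt_atTop 0] with t ht using (hbounds t ht).1
  · filter_upwards [eventually_gt_atTop 0] with t ht using (hbounds t ht).2
end
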